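/- Let K be a field of characteristic zero, let n ≥ 2, and let L be a LAnKe over K. For u ∈ L, r ≥ 0, and elements y_{t,1},…,y_{t,n-1} ∈ L (1 ≤ t ≤ r), let C(u) denote the iterated bracket [[⋯[[u,y_{1,1},…,y_{1,n-1}],y_{2,1},…,y_{2,n-1}],⋯],y_{r,1},…,y_{r,n-1}] obtained by successively bracketing u with y_{1,*}, then y_{2,*}, …, then y_{r,*}. Then for all z_0, z_1,…,z_{n-1}, w_1,…,w_{n-1} ∈ L one has (n−2)·C([[z_0,z_1,…,z_{n-1}],w_1,…,w_{n-1}]) + C([[z_0,w_1,…,w_{n-1}],z_1,…,z_{n-1}]) + Σ_{i=1}^{n-1} (−1)^i Σ_{j=1}^{n-1} (−1)^{j+1} C([[z_0,w_j,z_1,…,ẑ_i,…,z_{n-1}],z_i,w_1,…,ŵ_j,…,w_{n-1}]) = 0, where the integer coefficient n−2 acts via the canonical map ℤ → K. -/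

import Mathlib

/-- The tuple `(a, v₀, …, v_{n-2})` of length `n`: one element `a` prepended to the
length-`(n-1)` tuple `v`. -/
def consTup {L : Type*} {n : ℕ} (a : L) (v : Fin (n - 1) → L) : Fin n → L :=
  fun m =>
    if h0 : (m : ℕ) = 0 then a
    else v ⟨(m : ℕ) - 1, by have := m.isLt; omega⟩

/-- The tuple `(a, b, v₀, …, v̂ᵢ, …, v_{n-2})` of length `n`: two elements `a, b` followed
by the length-`(n-1)` tuple `v` with its `i`-th entry omitted. -/
def pairCons {L : Type*} {n : ℕ} (a b : L) (v : Fin (n - 1) → L) (i : Fin (n - 1)) :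
    Fin n → L :=
  fun m =>
    if h0 : (m : ℕ) = 0 then a
    else if h1 : (m : ℕ) = 1 then b
    else if (m : ℕ) - 2 < (i : ℕ) then
      v ⟨(m : ℕ) - 2, by have := m.isLt; have := i.isLt; omega⟩
    else v ⟨(m : ℕ) - 1, by have := m.isLt; omega⟩

/-- A LAnKe (Lie algebra of the `n`-th kind, or Filippov algebra) over a field `K`:
a vector space `L` with an `n`-linear bracket which is skew-symmetric and satisfies the
generalized Jacobi identity. -/
structure LAnKe (K : Type*) [Field K] (n : ℕ) (L : Type*)
    [AddCommGroup L] [Module K L] where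
  bracket : MultilinearMap K (fun _ : Fin n => L) L
  /-- `[x_1, …, x_n] = sign σ • [x_{σ(1)}, …, x_{σ(n)}]` for every permutation `σ`. -/
  skew : ∀ (x : Fin n → L) (σ : Equiv.Perm (Fin n)),
    bracket x = (Equiv.Perm.sign σ : ℤ) • bracket (x ∘ σ)
  /-- The generalized Jacobi identity:
  `[[x_1,…,x_n], y_1,…,y_{n-1}] = Σ_{i=1}^n [x_1,…,[x_i,y_1,…,y_{n-1}],…,x_n]`. -/
  jacobi : ∀ (x : Fin n → L) (y : Fin (n - 1) → L),
    bracket (consTup (bracket x) y) =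
      ∑ i : Fin n, bracket (Function.update x i (bracket (consTup (x i) y)))

/-- The comb `C(u) = [[⋯[[u, y_{1,1},…,y_{1,n-1}], y_{2,1},…,y_{2,n-1}], ⋯], y_{r,1},…,y_{r,n-1}]`
obtained by successively bracketing `u` with the rows `y 0, y 1, …, y (r-1)`. -/
def LAnKe.comb {K : Type*} [Field K] {n : ℕ} {L : Type*} [AddCommGroup L] [Module K L]
    (alg : LAnKe K n L) : (r : ℕ) → (Fin r → Fin (n - 1) → L) → L → L
  | 0, _, u => u
  | r + 1, y, u =>
      alg.bracket (consTup (alg.comb r (fun t => y t.castSucc) u) (y (Fin.last r)))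

/-!
Expand `[[z₀, z], w]` by the Jacobi identity. The summand with the inner bracket in slot `0` is
`[[z₀, w], z]`; in the summand with `[zᵢ, w]` in slot `i + 1`, skew-symmetry moves `[zᵢ, w]` to
the front, and a second Jacobi expansion, now against `(z₀, ẑᵢ)`, returns `[[z₀, z], w]` once
more together with the `i`-th row of the double sum. The `n - 1` copies of `[[z₀, z], w]` against
the one on the left leave the coefficient `n - 2`. This is the case `r = 0`, and since the comb
is linear in `u` it carries the relation to every `r`.
-/

theorem consTup_eq_cons {L : Type*} {p : ℕ} (a : L) (v : Fin p → L) :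
    (consTup a v : Fin (p + 1) → L) = Fin.cons a v := by
  ext m
  cases m using Fin.cases <;> simp [consTup]

theorem pairCons_eq_cons_cons {L : Type*} {p : ℕ} (a b : L) (v : Fin (p + 1) → L)
    (i : Fin (p + 1)) :
    (pairCons a b v i : Fin (p + 2) → L) = Fin.cons a (Fin.cons b (i.removeNth v)) := by
  ext m
  cases m using Fin.cases with
  | zero => simp [pairCons]
  | succ m =>
    cases m using Fin.cases with
    | zero => simp [pairCons]
    | succ k =>
      simp only [pairCons, Fin.val_succ, Fin.cons_succ, Fin.removeNth_apply, Fin.succAbove,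
        Fin.lt_def, Fin.val_castSucc]
      split_ifs <;> first
        | omega
        | contradiction
        | exact congrArg v (Fin.ext (by simp only [Fin.val_succ, Fin.val_castSucc]; omega))

theorem neg_one_pow_smul_neg_one_pow_smul {M : Type*} [AddCommGroup M] (k : ℕ) (v : M) :
    ((-1) ^ k : ℤ) • ((-1) ^ k : ℤ) • v = v := by
  rw [smul_smul, ← mul_pow, neg_one_mul, neg_neg, one_pow, one_smul]

namespace LAnKe

variable {K : Type*} [Field K] {L : Type*} [AddCommGroup L] [Module K L] {p : ℕ}

section Cons

variable (alg : LAnKe K (p + 1) L)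

theorem bracket_cons (a : L) (x : Fin p → L) (k : Fin (p + 1)) :
    alg.bracket (Fin.cons a x) = ((-1) ^ (k : ℕ) : ℤ) • alg.bracket (k.insertNth a x) := by
  rw [alg.skew _ k.cycleRange, Fin.cons_comp_cycleRange, Fin.sign_cycleRange]
  push_cast
  rfl

theorem bracket_insertNth (a : L) (x : Fin p → L) (k : Fin (p + 1)) :
    alg.bracket (k.insertNth a x) = ((-1) ^ (k : ℕ) : ℤ) • alg.bracket (Fin.cons a x) := by
  rw [bracket_cons alg a x k, neg_one_pow_smul_neg_one_pow_smul]

theorem jacobi_cons (x : Fin (p + 1) → L) (y : Fin p → L) :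
    alg.bracket (Fin.cons (alg.bracket x) y) =
      ∑ k, alg.bracket (Function.update x k (alg.bracket (Fin.cons (x k) y))) := by
  simpa only [consTup_eq_cons] using alg.jacobi x y

def bracketLeft (t : Fin p → L) : L →ₗ[K] L :=
  alg.bracket.toLinearMap (Fin.cons 0 t) 0

@[simp]
theorem bracketLeft_apply (t : Fin p → L) (u : L) :
    alg.bracketLeft t u = alg.bracket (Fin.cons u t) := by
  simp [bracketLeft, Fin.update_cons_zero]

def combLinear : (r : ℕ) → (Fin r → Fin p → L) → L →ₗ[K] L
  | 0, _ => LinearMap.id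
  | r + 1, y => alg.bracketLeft (y (Fin.last r)) ∘ₗ combLinear r (fun t => y t.castSucc)

theorem combLinear_apply (r : ℕ) (y : Fin r → Fin p → L) (u : L) :
    alg.combLinear r y u = alg.comb r y u := by
  induction r with
  | zero => rfl
  | succ r ih =>
    simp only [combLinear, comb, LinearMap.comp_apply, bracketLeft_apply, ih, consTup_eq_cons]

end Cons

section Moves

variable (alg : LAnKe K (p + 2) L)

theorem bracket_cons_update (a u : L) (v : Fin (p + 1) → L) (i : Fin (p + 1)) :
    alg.bracket (Fin.cons a (Function.update v i u)) =
      ((-1) ^ ((i : ℕ) + 1) : ℤ) • alg.bracket (Fin.cons u (Fin.cons a (i.removeNth v))) := by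
  rw [← Fin.insertNth_removeNth, ← Fin.insertNth_succ_cons, bracket_insertNth, Fin.val_succ]

theorem bracket_cons_cons_removeNth (a : L) (v : Fin (p + 1) → L) (i : Fin (p + 1)) :
    alg.bracket (Fin.cons (v i) (Fin.cons a (i.removeNth v))) =
      ((-1) ^ ((i : ℕ) + 1) : ℤ) • alg.bracket (Fin.cons a v) := by
  rw [bracket_cons _ _ _ i.succ, Fin.insertNth_succ_cons, Fin.insertNth_self_removeNth,
    Fin.val_succ]

theorem bracket_cons_cons_swap (a b : L) (t : Fin p → L) :
    alg.bracket (Fin.cons a (Fin.cons b t)) = -alg.bracket (Fin.cons b (Fin.cons a t)) := by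
  rw [bracket_cons _ _ _ (0 : Fin (p + 1)).succ, Fin.insertNth_succ_cons, Fin.insertNth_zero']
  simp

theorem bracket_cons_update_bracket (z0 : L) (z w : Fin (p + 1) → L) (i : Fin (p + 1)) :
    alg.bracket (Fin.cons z0 (Function.update z i (alg.bracket (Fin.cons (z i) w)))) =
      alg.bracket (Fin.cons (alg.bracket (Fin.cons z0 z)) w) +
        ∑ j : Fin (p + 1), ((-1) ^ ((i : ℕ) + 1) * (-1) ^ (((j : ℕ) + 1) + 1) : ℤ) •
          alg.bracket (Fin.cons (alg.bracket (Fin.cons z0 (Fin.cons (w j) (i.removeNth z))))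
            (Fin.cons (z i) (j.removeNth w))) := by
  have hz := alg.bracket_cons_cons_removeNth z0 z i
  have hw : ∀ j, alg.bracket (Fin.cons (z i)
      (Function.update w j (alg.bracket (Fin.cons (w j) (Fin.cons z0 (i.removeNth z)))))) =
      ((-1) ^ (((j : ℕ) + 1) + 1) : ℤ) •
        alg.bracket (Fin.cons (alg.bracket (Fin.cons z0 (Fin.cons (w j) (i.removeNth z))))
          (Fin.cons (z i) (j.removeNth w))) := by
    intro j
    rw [bracket_cons_cons_swap, bracket_cons_update, ← bracketLeft_apply, map_neg,
      bracketLeft_apply, smul_neg, ← neg_smul, pow_succ _ ((j : ℕ) + 1), mul_neg_one]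
  rw [bracket_cons_update, jacobi_cons, Fin.sum_univ_succ]
  simp only [Fin.cons_zero, Fin.cons_succ, Fin.update_cons_zero, ← Fin.cons_update, hz, hw]
  rw [← bracketLeft_apply, map_zsmul, bracketLeft_apply, smul_add,
    neg_one_pow_smul_neg_one_pow_smul, Finset.smul_sum]
  simp only [smul_smul]

theorem bracket_relation (z0 : L) (z w : Fin (p + 1) → L) :
    (p : ℤ) • alg.bracket (Fin.cons (alg.bracket (Fin.cons z0 z)) w) +
      alg.bracket (Fin.cons (alg.bracket (Fin.cons z0 w)) z) +
      ∑ i : Fin (p + 1), ∑ j : Fin (p + 1),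
        ((-1) ^ ((i : ℕ) + 1) * (-1) ^ (((j : ℕ) + 1) + 1) : ℤ) •
          alg.bracket (Fin.cons (alg.bracket (Fin.cons z0 (Fin.cons (w j) (i.removeNth z))))
            (Fin.cons (z i) (j.removeNth w))) = 0 := by
  have hJ := alg.jacobi_cons (Fin.cons z0 z) w
  rw [Fin.sum_univ_succ] at hJ
  simp only [Fin.cons_zero, Fin.cons_succ, Fin.update_cons_zero,
    ← Fin.cons_update, bracket_cons_update_bracket, Finset.sum_add_distrib, Finset.sum_const,
    Finset.card_univ, Fintype.card_fin] at hJ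
  linear_combination (norm := module) -hJ

end Moves

end LAnKe

/-- Here `z i` is the paper's `z_{i+1}`, so the paper's sign `(-1)^i` is `(-1)^{(i:ℕ)+1}`;
likewise for `w`. -/
theorem lanke_comb_relation_general
    (K : Type*) [Field K] (n : ℕ) (hn : 2 ≤ n)
    (L : Type*) [AddCommGroup L] [Module K L] (alg : LAnKe K n L)
    (r : ℕ) (y : Fin r → Fin (n - 1) → L)
    (z0 : L) (z w : Fin (n - 1) → L) :
    (((n : ℤ) - 2 : ℤ) : K) •
        alg.comb r y (alg.bracket (consTup (alg.bracket (consTup z0 z)) w)) +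
      alg.comb r y (alg.bracket (consTup (alg.bracket (consTup z0 w)) z)) +
      ∑ i : Fin (n - 1), ∑ j : Fin (n - 1),
        ((-1 : ℤ) ^ ((i : ℕ) + 1) * (-1 : ℤ) ^ (((j : ℕ) + 1) + 1)) •
          alg.comb r y
            (alg.bracket
              (pairCons (alg.bracket (pairCons z0 (w j) z i)) (z i) w j)) = 0 := by
  obtain ⟨p, rfl⟩ : ∃ p, n = p + 2 := ⟨n - 2, by omega⟩
  have key := congrArg (alg.combLinear r y) (alg.bracket_relation z0 z w)
  simp only [map_add, map_sum, map_zsmul, map_zero, LAnKe.combLinear_apply] at key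
  rw [Int.cast_smul_eq_zsmul, show ((p + 2 : ℕ) : ℤ) - 2 = p by omega]
  simp only [consTup_eq_cons, pairCons_eq_cons_cons]
  exact key

/-- in a LAnKe, for any comb `C` of `r` brackets,
`(n-2)·C([[z_0,z_1,…,z_{n-1}], w_1,…,w_{n-1}]) + C([[z_0,w_1,…,w_{n-1}], z_1,…,z_{n-1}])
   + Σ_{i=1}^{n-1} (-1)^i Σ_{j=1}^{n-1} (-1)^{j+1}
       C([[z_0,w_j,z_1,…,ẑ_i,…,z_{n-1}], z_i, w_1,…,ŵ_j,…,w_{n-1}]) = 0`,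
where `n-2` acts via the canonical map `ℤ → K`. Here `z i : L` for `i : Fin (n-1)` is
the paper's `z_{i+1}` (so the paper's sign `(-1)^i` is `(-1)^{(i:ℕ)+1}`), likewise for `w`. -/
theorem lanke_comb_relation
    (K : Type*) [Field K] [CharZero K] (n : ℕ) (hn : 2 ≤ n)
    (L : Type*) [AddCommGroup L] [Module K L] (alg : LAnKe K n L)
    (r : ℕ) (y : Fin r → Fin (n - 1) → L)
    (z0 : L) (z w : Fin (n - 1) → L) :
    (((n : ℤ) - 2 : ℤ) : K) •
        alg.comb r y (alg.bracket (consTup (alg.bracket (consTup z0 z)) w)) +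
      alg.comb r y (alg.bracket (consTup (alg.bracket (consTup z0 w)) z)) +
      ∑ i : Fin (n - 1), ∑ j : Fin (n - 1),
        ((-1 : ℤ) ^ ((i : ℕ) + 1) * (-1 : ℤ) ^ (((j : ℕ) + 1) + 1)) •
          alg.comb r y
            (alg.bracket
              (pairCons (alg.bracket (pairCons z0 (w j) z i)) (z i) w j)) = 0 :=
  lanke_comb_relation_general K n hn L alg r y z0 z w
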